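/- Let Σ = {a,ā,b,b̄,c,c̄}, k ≥ 1, m ≥ 1, and L = c·{ā,b̄}*·a^k·ā^k. Then the iterated m-bounded hairpin completion satisfies H_k*(L,m,m) = L ∪ H_k(L,m,m); i.e., the iteration stabilizes after one step. -/

import Mathlib

open Computability

/-- Reverse-complement of a word under the involution `bar`. -/
def wbar {S : Type} (bar : S → S) (w : List S) : List S := (w.map bar).reverse

/-- The set of `α`-prefixes of `w` of length at most `ℓ`. -/
def Pa {S : Type} (α w : List S) (ℓ : ℕ) : Language S :=
  {v | v ++ α <+: w ∧ v.length ≤ ℓ}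

/-- `α Σ* ᾱ` : words with prefix `α` and suffix `ᾱ`. -/
def Dom {S : Type} (bar : S → S) (α : List S) : Language S :=
  {z | ∃ β, z = α ++ β ++ wbar bar α}

/-- One-step parameterized hairpin completion with binding word `α`,
left bound `ℓ`, right bound `r`. -/
def HaP {S : Type} (bar : S → S) (α : List S) (ℓ r : ℕ) (L : Language S) : Language S :=
  {z | ∃ γ β, γ.length ≤ ℓ ∧ z = γ ++ α ++ β ++ wbar bar α ++ wbar bar γ ∧
      α ++ β ++ wbar bar α ++ wbar bar γ ∈ L} ⊔
  {z | ∃ γ β, γ.length ≤ r ∧ z = γ ++ α ++ β ++ wbar bar α ++ wbar bar γ ∧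
      γ ++ α ++ β ++ wbar bar α ∈ L}

/-- One-step parameterized hairpin completion `H_k(L,ℓ,r)`. -/
def HkP {S : Type} (bar : S → S) (k ℓ r : ℕ) (L : Language S) : Language S :=
  {z | ∃ α : List S, α.length = k ∧ z ∈ HaP bar α ℓ r L}

def HaIter {S : Type} (bar : S → S) (α : List S) (ℓ r : ℕ) (L : Language S) : ℕ → Language S
  | 0 => L
  | n + 1 => HaP bar α ℓ r (HaIter bar α ℓ r L n)

/-- Iterated parameterized hairpin completion `H_α*(L,ℓ,r)`. -/
def HaStar {S : Type} (bar : S → S) (α : List S) (ℓ r : ℕ) (L : Language S) : Language S :=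
  {z | ∃ n, z ∈ HaIter bar α ℓ r L n}

def HkIter {S : Type} (bar : S → S) (k ℓ r : ℕ) (L : Language S) : ℕ → Language S
  | 0 => L
  | n + 1 => HkP bar k ℓ r (HkIter bar k ℓ r L n)

/-- Iterated parameterized hairpin completion `H_k*(L,ℓ,r)`. -/
def HkStar {S : Type} (bar : S → S) (k ℓ r : ℕ) (L : Language S) : Language S :=
  {z | ∃ n, z ∈ HkIter bar k ℓ r L n}

/-- Unbounded two-sided hairpin completion `H_k(L)`. -/
def HU {S : Type} (bar : S → S) (k : ℕ) (L : Language S) : Language S :=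
  {z | ∃ γ α β, α.length = k ∧ z = γ ++ α ++ β ++ wbar bar α ++ wbar bar γ ∧
      (α ++ β ++ wbar bar α ++ wbar bar γ ∈ L ∨ γ ++ α ++ β ++ wbar bar α ∈ L)}

/-- Unbounded right-sided hairpin completion `RH_k(L)`. -/
def RHU {S : Type} (bar : S → S) (k : ℕ) (L : Language S) : Language S :=
  {z | ∃ γ α β, α.length = k ∧ z = γ ++ α ++ β ++ wbar bar α ++ wbar bar γ ∧
      γ ++ α ++ β ++ wbar bar α ∈ L}

def HUIter {S : Type} (bar : S → S) (k : ℕ) (L : Language S) : ℕ → Language S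
  | 0 => L
  | n + 1 => HU bar k (HUIter bar k L n)

/-- Iterated unbounded two-sided hairpin completion `H_k*(L)`. -/
def HUStar {S : Type} (bar : S → S) (k : ℕ) (L : Language S) : Language S :=
  {z | ∃ n, z ∈ HUIter bar k L n}

def RHUIter {S : Type} (bar : S → S) (k : ℕ) (L : Language S) : ℕ → Language S
  | 0 => L
  | n + 1 => RHU bar k (RHUIter bar k L n)

/-- Iterated unbounded right-sided hairpin completion `RH_k*(L)`. -/
def RHUStar {S : Type} (bar : S → S) (k : ℕ) (L : Language S) : Language S :=
  {z | ∃ n, z ∈ RHUIter bar k L n}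

/-- Image of a language under reverse-complement. -/
def barSet {S : Type} (bar : S → S) (A : Language S) : Language S := wbar bar '' A

/-- The alphabet `Σ = {a, ā, b, b̄, c, c̄}`. -/
inductive HpAb : Type
  | a | abar | b | bbar | c | cbar
deriving DecidableEq

/-- The involution pairing `a ↔ ā`, `b ↔ b̄`, `c ↔ c̄`. -/
def HpAb.inv : HpAb → HpAb
  | .a => .abar
  | .abar => .a
  | .b => .bbar
  | .bbar => .b
  | .c => .cbar
  | .cbar => .c

/-- The language `L = c · {ā,b̄}* · a^k · ā^k`. -/
def LHp (k : ℕ) : Language HpAb :=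
  {z | ∃ v : List HpAb, (∀ x ∈ v, x = HpAb.abar ∨ x = HpAb.bbar) ∧
    z = HpAb.c :: (v ++ List.replicate k HpAb.a ++ List.replicate k HpAb.abar)}

/-- `u^n`: the `n`-fold concatenation of the word `u`. -/
def wpow {S : Type} (u : List S) (n : ℕ) : List S := (List.replicate n u).flatten

/-!
Every word of `L = c{ā,b̄}*aᵏāᵏ` starts with `c` and contains no `c̄`, so a left completion of
`L` is impossible (its `ᾱ` would end in `c̄`), and a right completion `γ α β ᾱ ∈ L` is forced to
have `α = aᵏ`, `β = []`, `γ = c v`. Hence `H_k(L,m,m)` consists of the words `c v aᵏ āᵏ v̄ c̄`,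
in which `c` and `c̄` occur only as the first and last letter; every completion of such a word
must have `γ = []` and gives back the word itself, so the iteration stops after one step.
-/

theorem HpAb.inv_involutive : Function.Involutive HpAb.inv := by
  intro x; cases x <;> rfl

section wbar

variable {S : Type} {bar : S → S}

@[simp] theorem wbar_nil : wbar bar [] = [] := rfl

@[simp] theorem wbar_cons (x : S) (u : List S) : wbar bar (x :: u) = wbar bar u ++ [bar x] := by
  simp [wbar]

@[simp] theorem length_wbar (u : List S) : (wbar bar u).length = u.length := by
  simp [wbar]

@[simp] theorem wbar_replicate (n : ℕ) (x : S) :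
    wbar bar (List.replicate n x) = List.replicate n (bar x) := by
  simp [wbar]

theorem wbar_wbar (hbar : Function.Involutive bar) (u : List S) : wbar bar (wbar bar u) = u := by
  simp [wbar, List.map_reverse, hbar.comp_self]

theorem mem_wbar {y : S} {u : List S} : y ∈ wbar bar u ↔ ∃ x ∈ u, bar x = y := by
  simp [wbar]

end wbar

section hairpin

variable {S : Type} {bar : S → S} {k ℓ r : ℕ}

theorem HkP_mono {A B : Language S} (h : A ≤ B) : HkP bar k ℓ r A ≤ HkP bar k ℓ r B := by
  rintro z ⟨α, hα, ⟨γ, β, hγ, rfl, hw⟩ | ⟨γ, β, hγ, rfl, hw⟩⟩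
  · exact ⟨α, hα, Or.inl ⟨γ, β, hγ, rfl, h hw⟩⟩
  · exact ⟨α, hα, Or.inr ⟨γ, β, hγ, rfl, h hw⟩⟩

theorem HkP_sup (A B : Language S) :
    HkP bar k ℓ r (A ⊔ B) = HkP bar k ℓ r A ⊔ HkP bar k ℓ r B := by
  refine le_antisymm ?_ (sup_le (HkP_mono le_sup_left) (HkP_mono le_sup_right))
  rintro z ⟨α, hα, ⟨γ, β, hγ, rfl, hA | hB⟩ | ⟨γ, β, hγ, rfl, hA | hB⟩⟩
  · exact Or.inl ⟨α, hα, Or.inl ⟨γ, β, hγ, rfl, hA⟩⟩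
  · exact Or.inr ⟨α, hα, Or.inl ⟨γ, β, hγ, rfl, hB⟩⟩
  · exact Or.inl ⟨α, hα, Or.inr ⟨γ, β, hγ, rfl, hA⟩⟩
  · exact Or.inr ⟨α, hα, Or.inr ⟨γ, β, hγ, rfl, hB⟩⟩

theorem HkStar_eq_sup_of_HkP_HkP_le {A : Language S}
    (h : HkP bar k ℓ r (HkP bar k ℓ r A) ≤ HkP bar k ℓ r A) :
    HkStar bar k ℓ r A = A ⊔ HkP bar k ℓ r A := by
  have hiter : ∀ n, HkIter bar k ℓ r A n ≤ A ⊔ HkP bar k ℓ r A := by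
    intro n
    induction n with
    | zero => exact le_sup_left
    | succ n ih =>
      calc HkP bar k ℓ r (HkIter bar k ℓ r A n) ≤ HkP bar k ℓ r (A ⊔ HkP bar k ℓ r A) :=
            HkP_mono ih
        _ = HkP bar k ℓ r A ⊔ HkP bar k ℓ r (HkP bar k ℓ r A) := HkP_sup _ _
        _ ≤ A ⊔ HkP bar k ℓ r A := le_sup_of_le_right (sup_le le_rfl h)
  ext z
  constructor
  · rintro ⟨n, hn⟩
    exact hiter n hn
  · rintro (hz | hz)
    exacts [⟨0, hz⟩, ⟨1, hz⟩]

def IsFramed (bar : S → S) (x : S) (A : Language S) : Prop :=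
  ∀ w ∈ A, ∃ u, x ∉ u ∧ bar x ∉ u ∧ w = x :: u ++ [bar x]

/-- In a completion of a framed word, `α` must start with the marker `x`, so a nonempty `γ`
would put a second `x` or `x̄` inside the frame: hence `γ = []` and the word is unchanged. -/
theorem HaP_le_self_of_isFramed (hbar : Function.Injective bar) {x : S}
    {α : List S} (hα : α ≠ []) {A : Language S} (hA : IsFramed bar x A) :
    HaP bar α ℓ r A ≤ A := by
  obtain ⟨y, α, rfl⟩ := List.exists_cons_of_ne_nil hα
  intro z hz
  -- `≤` unfolds to `Set` membership, which `simpa` would not match with `Language` membership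
  show z ∈ A
  rcases hz with ⟨γ, β, -, rfl, hw⟩ | ⟨γ, β, -, rfl, hw⟩
  · obtain ⟨u, -, hxu, hwu⟩ := hA _ hw
    simp only [wbar_cons, List.cons_append, List.cons.injEq] at hwu
    obtain ⟨rfl, hwu⟩ := hwu
    suffices γ = [] by simpa [this] using hw
    rcases List.eq_nil_or_concat (wbar bar γ) with hγ | ⟨g, e, hγ⟩
    · simpa using congrArg List.length hγ
    · rw [hγ] at hwu
      simp only [List.concat_eq_append, ← List.append_assoc, List.append_singleton_inj] at hwu
      exact absurd (hwu.1 ▸ by simp) hxu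
  · obtain ⟨u, hxu, -, hwu⟩ := hA _ hw
    simp only [wbar_cons, ← List.append_assoc, List.append_singleton_inj] at hwu
    obtain ⟨hwu, hxy⟩ := hwu
    obtain rfl := hbar hxy
    suffices γ = [] by simpa [this] using hw
    rcases γ with - | ⟨g, γ⟩
    · rfl
    · simp only [List.cons_append, List.cons.injEq] at hwu
      exact absurd (hwu.2 ▸ by simp) hxu

theorem HkP_le_self_of_isFramed (hbar : Function.Injective bar) {x : S}
    (hk : 0 < k) {A : Language S} (hA : IsFramed bar x A) :
    HkP bar k ℓ r A ≤ A := by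
  rintro z ⟨α, hα, hz⟩
  exact HaP_le_self_of_isFramed hbar (List.ne_nil_of_length_pos (hα ▸ hk)) hA hz

end hairpin

theorem List.append_replicate_append_inj {S : Type} [DecidableEq S] {x : S} {k : ℕ}
    (hk : 0 < k) {u t u' : List S} (hu' : x ∉ u')
    (h : u ++ List.replicate k x ++ t = u' ++ List.replicate k x) : u = u' ∧ t = [] := by
  have hcount := congrArg (List.count x) h
  simp only [List.count_append, List.count_replicate_self, List.count_eq_zero.mpr hu'] at hcount
  have ht : t = [] := by
    obtain ⟨k, rfl⟩ : ∃ j, k = j + 1 := ⟨k - 1, by omega⟩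
    rcases List.eq_nil_or_concat t with ht | ⟨t, y, rfl⟩
    · exact ht
    · simp only [List.replicate_succ', List.concat_eq_append, ← List.append_assoc,
        List.append_singleton_inj] at h
      rw [h.2, List.concat_eq_append, List.count_append, List.count_singleton_self] at hcount
      omega
  subst ht
  simpa using h

def LHpCompletion (k n : ℕ) : Language HpAb :=
  {z | ∃ v : List HpAb, (∀ x ∈ v, x = HpAb.abar ∨ x = HpAb.bbar) ∧ v.length < n ∧
    z = HpAb.c :: (v ++ List.replicate k HpAb.a ++ List.replicate k HpAb.abar ++
      wbar HpAb.inv v) ++ [HpAb.cbar]}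

theorem HkP_LHp {k : ℕ} (hk : 0 < k) (ℓ n : ℕ) :
    HkP HpAb.inv k ℓ n (LHp k) = LHpCompletion k n := by
  apply le_antisymm
  · rintro z ⟨α, hα, ⟨γ, β, -, rfl, v, hv, hw⟩ | ⟨γ, β, hγ, rfl, v, hv, hw⟩⟩
    · obtain ⟨x, α, rfl⟩ := List.exists_cons_of_ne_nil (List.ne_nil_of_length_pos (hα ▸ hk))
      simp only [wbar_cons, List.cons_append, List.cons.injEq] at hw
      obtain ⟨rfl, hw⟩ := hw
      have hcbar : HpAb.cbar ∈ v ++ List.replicate k HpAb.a ++ List.replicate k HpAb.abar :=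
        hw ▸ by simp [HpAb.inv]
      simp only [List.mem_append, List.mem_replicate] at hcbar
      rcases hcbar with (h | h) | h
      exacts [by simpa using hv _ h, by simp at h, by simp at h]
    · rw [← List.cons_append] at hw
      obtain ⟨hw, hαbar⟩ := List.append_inj' hw (by simp [hα])
      obtain rfl : α = List.replicate k HpAb.a := by
        simpa [wbar_wbar HpAb.inv_involutive, HpAb.inv] using congrArg (wbar HpAb.inv) hαbar
      have hav : HpAb.a ∉ HpAb.c :: v := by
        simp only [List.mem_cons, reduceCtorEq, false_or]
        exact fun h => by simpa using hv _ h
      obtain ⟨rfl, rfl⟩ := List.append_replicate_append_inj hk hav hw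
      exact ⟨v, hv, by simpa using hγ, by simp [HpAb.inv]⟩
  · rintro z ⟨v, hv, hvn, rfl⟩
    refine ⟨List.replicate k HpAb.a, by simp,
      Or.inr ⟨HpAb.c :: v, [], by simpa using hvn, ?_, v, hv, ?_⟩⟩ <;> simp [HpAb.inv]

theorem isFramed_LHpCompletion (k n : ℕ) : IsFramed HpAb.inv HpAb.c (LHpCompletion k n) := by
  rintro w ⟨v, hv, -, rfl⟩
  refine ⟨_, ?_, ?_, rfl⟩ <;>
  · simp only [List.mem_append, List.mem_replicate, mem_wbar, HpAb.inv, not_or]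
    refine ⟨⟨⟨fun h => by simpa using hv _ h, by simp⟩, by simp⟩, ?_⟩
    rintro ⟨x, hx, h⟩
    rcases hv x hx with rfl | rfl <;> cases h

theorem HkStar_LHp_eq_general (k m : ℕ) (hk : 1 ≤ k) :
    HkStar HpAb.inv k m m (LHp k) = LHp k ⊔ HkP HpAb.inv k m m (LHp k) := by
  apply HkStar_eq_sup_of_HkP_HkP_le
  rw [HkP_LHp hk]
  exact HkP_le_self_of_isFramed HpAb.inv_involutive.injective hk (isFramed_LHpCompletion k m)

/-- The iterated `m`-bounded hairpin completion of `L = c·{ā,b̄}*·a^k·ā^k`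
stabilizes after one step: `H_k*(L,m,m) = L ∪ H_k(L,m,m)`. -/
theorem HkStar_LHp_eq (k m : ℕ) (hk : 1 ≤ k) (hm : 1 ≤ m) :
    HkStar HpAb.inv k m m (LHp k) = LHp k ⊔ HkP HpAb.inv k m m (LHp k) :=
  HkStar_LHp_eq_general k m hk
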